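/- Let G be a finite simple graph with no isolated vertex. If G has a unique minimum paired-dominating set, then for every minimum ev-dominating set M of G, no two distinct edges of M share a vertex. -/

import Mathlib

open SimpleGraph

variable {V : Type*}

/-- `D` is a dominating set of `G`: every vertex outside `D` has a neighbor in `D`. -/
def IsDomSet (G : SimpleGraph V) (D : Set V) : Prop :=
  ∀ v ∉ D, ∃ u ∈ D, G.Adj u v

/-- The edge `e` ev-dominates the vertex `v`: `e` is incident to `v` or to a neighbor of `v`. -/
def EvDom (G : SimpleGraph V) (e : Sym2 V) (v : V) : Prop :=
  v ∈ e ∨ ∃ u ∈ e, G.Adj u v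

/-- `M` is an edge-vertex dominating set of `G`. -/
def IsEvDomSet (G : SimpleGraph V) (M : Set (Sym2 V)) : Prop :=
  M ⊆ G.edgeSet ∧ ∀ v : V, ∃ e ∈ M, EvDom G e v

/-- `M` is a minimum edge-vertex dominating set of `G`. -/
def IsMinEvDomSet (G : SimpleGraph V) (M : Set (Sym2 V)) : Prop :=
  IsEvDomSet G M ∧ ∀ M' : Set (Sym2 V), IsEvDomSet G M' → M.ncard ≤ M'.ncard

/-- The edge-vertex domination number `γ_ev(G)`. -/
noncomputable def evNum (G : SimpleGraph V) : ℕ :=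
  sInf {n | ∃ M : Set (Sym2 V), IsEvDomSet G M ∧ M.ncard = n}

/-- The set of all endpoints of edges in `M`. -/
def edgeVerts (M : Set (Sym2 V)) : Set V := {v | ∃ e ∈ M, v ∈ e}

/-- `M` is a perfect matching of the induced subgraph `G[D]`: a set of edges of `G`
with all endpoints in `D`, such that every vertex of `D` lies in exactly one edge of `M`. -/
def IsPMOn (G : SimpleGraph V) (D : Set V) (M : Set (Sym2 V)) : Prop :=
  M ⊆ G.edgeSet ∧ (∀ e ∈ M, ∀ v ∈ e, v ∈ D) ∧ ∀ v ∈ D, ∃! e, e ∈ M ∧ v ∈ e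

/-- `D` is a paired-dominating set of `G`. -/
def IsPairedDomSet (G : SimpleGraph V) (D : Set V) : Prop :=
  IsDomSet G D ∧ ∃ M : Set (Sym2 V), IsPMOn G D M

/-- `D` is a minimum paired-dominating set of `G`. -/
def IsMinPairedDomSet (G : SimpleGraph V) (D : Set V) : Prop :=
  IsPairedDomSet G D ∧ ∀ D' : Set V, IsPairedDomSet G D' → D.ncard ≤ D'.ncard

/-- The paired-domination number `γ_pr(G)`. -/
noncomputable def prNum (G : SimpleGraph V) : ℕ :=
  sInf {n | ∃ D : Set V, IsPairedDomSet G D ∧ D.ncard = n}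

/-- No two distinct edges of `M` share a vertex. -/
def NoSharedVertex (M : Set (Sym2 V)) : Prop :=
  ∀ e ∈ M, ∀ f ∈ M, e ≠ f → ∀ v : V, v ∈ e → v ∉ f

/-- `G` has no isolated vertex. -/
def NoIsolated (G : SimpleGraph V) : Prop := ∀ v : V, ∃ u, G.Adj u v

/-!
By minimality every edge of a minimum ev-dominating set `M` has a private vertex, one that no
other edge of `M` ev-dominates; and the matching of a paired-dominating set `D` ev-dominates `G`,
so `2|M| ≤ |D|`. If `a` is a shared vertex of `M` and `ab ∈ M`, the private vertex `q` of `ab`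
is neither `a` nor a neighbour of `a`, hence is adjacent to `b`; then neither `b` nor `q` lies on
another edge of `M`. Keep one edge of `M` at each shared vertex and replace every other edge `ab`
through it by `bq`: the result is a matching with at most `|M|` edges covering all vertices of
`M`, so its vertex set is a paired-dominating set of size at most `2|M| ≤ γ_pr`. Keeping one or
the other of two edges at the same shared vertex gives two different minimum paired-dominating
sets.
-/

lemma edgeVerts_coe_finset [DecidableEq V] (Q : Finset (Sym2 V)) :
    edgeVerts (Q : Set (Sym2 V)) = ↑(Q.biUnion Sym2.toFinset) := by
  ext x
  simp [edgeVerts]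

lemma ncard_edgeVerts_le {Q : Set (Sym2 V)} (hQ : Q.Finite) :
    (edgeVerts Q).ncard ≤ 2 * Q.ncard := by
  classical
  lift Q to Finset (Sym2 V) using hQ
  rw [edgeVerts_coe_finset, Set.ncard_coe_finset, Set.ncard_coe_finset, mul_comm]
  refine Finset.card_biUnion_le_card_mul _ _ _ fun e _ => ?_
  rw [Sym2.card_toFinset]
  split_ifs <;> omega

lemma NoSharedVertex.ncard_edgeVerts {Q : Set (Sym2 V)} (hQ : NoSharedVertex Q)
    (hfin : Q.Finite) (hloop : ∀ e ∈ Q, ¬ e.IsDiag) :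
    (edgeVerts Q).ncard = 2 * Q.ncard := by
  classical
  lift Q to Finset (Sym2 V) using hfin
  rw [edgeVerts_coe_finset, Set.ncard_coe_finset, Set.ncard_coe_finset, Finset.card_biUnion,
    Finset.sum_congr rfl fun e he => Sym2.card_toFinset_of_not_isDiag e (hloop e he),
    Finset.sum_const, smul_eq_mul, mul_comm]
  intro e he f hf hef
  rw [Function.onFun, Finset.disjoint_left]
  intro x hxe hxf
  exact hQ e he f hf hef x (Sym2.mem_toFinset.1 hxe) (Sym2.mem_toFinset.1 hxf)

section Domination

variable {G : SimpleGraph V} {D D' : Set V} {M P : Set (Sym2 V)}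

lemma IsDomSet.mono (hD : IsDomSet G D) (h : D ⊆ D') : IsDomSet G D' := fun v hv =>
  let ⟨u, hu, huv⟩ := hD v fun hvD => hv (h hvD)
  ⟨u, h hu, huv⟩

lemma IsEvDomSet.isDomSet_edgeVerts (hM : IsEvDomSet G M) : IsDomSet G (edgeVerts M) := by
  intro v hv
  obtain ⟨e, he, hve | ⟨u, hue, huv⟩⟩ := hM.2 v
  · exact absurd ⟨e, he, hve⟩ hv
  · exact ⟨u, ⟨e, he, hue⟩, huv⟩

lemma IsPMOn.isEvDomSet (hD : IsDomSet G D) (hP : IsPMOn G D P) : IsEvDomSet G P := by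
  refine ⟨hP.1, fun v => ?_⟩
  by_cases hv : v ∈ D
  · obtain ⟨e, ⟨he, hve⟩, -⟩ := hP.2.2 v hv
    exact ⟨e, he, Or.inl hve⟩
  · obtain ⟨u, hu, huv⟩ := hD v hv
    obtain ⟨e, ⟨he, hue⟩, -⟩ := hP.2.2 u hu
    exact ⟨e, he, Or.inr ⟨u, hue, huv⟩⟩

lemma IsPMOn.noSharedVertex (hP : IsPMOn G D P) : NoSharedVertex P := by
  intro e he f hf hef x hxe hxf
  obtain ⟨g, -, hg⟩ := hP.2.2 x (hP.2.1 e he x hxe)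
  exact hef ((hg e ⟨he, hxe⟩).trans (hg f ⟨hf, hxf⟩).symm)

lemma IsPMOn.edgeVerts_subset (hP : IsPMOn G D P) : edgeVerts P ⊆ D := by
  rintro x ⟨e, he, hxe⟩
  exact hP.2.1 e he x hxe

lemma NoSharedVertex.isPMOn_edgeVerts (hP : NoSharedVertex P) (hPG : P ⊆ G.edgeSet) :
    IsPMOn G (edgeVerts P) P := by
  refine ⟨hPG, fun e he x hxe => ⟨e, he, hxe⟩, ?_⟩
  rintro x ⟨e, he, hxe⟩
  refine ⟨e, ⟨he, hxe⟩, fun f ⟨hf, hxf⟩ => ?_⟩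
  by_contra hfe
  exact hP f hf e he hfe x hxf hxe

lemma IsPairedDomSet.two_mul_ncard_le [Finite V] (hD : IsPairedDomSet G D)
    (hM : IsMinEvDomSet G M) : 2 * M.ncard ≤ D.ncard := by
  obtain ⟨hDdom, P, hP⟩ := hD
  calc 2 * M.ncard ≤ 2 * P.ncard := Nat.mul_le_mul_left 2 (hM.2 P (hP.isEvDomSet hDdom))
    _ = (edgeVerts P).ncard := (hP.noSharedVertex.ncard_edgeVerts (Set.toFinite P)
          fun e he => G.not_isDiag_of_mem_edgeSet (hP.1 he)).symm
    _ ≤ D.ncard := Set.ncard_le_ncard hP.edgeVerts_subset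

end Domination

def IsShared (M : Set (Sym2 V)) (x : V) : Prop :=
  ∃ g ∈ M, ∃ g' ∈ M, g ≠ g' ∧ x ∈ g ∧ x ∈ g'

lemma noSharedVertex_iff {M : Set (Sym2 V)} : NoSharedVertex M ↔ ∀ x, ¬ IsShared M x := by
  simp only [NoSharedVertex, IsShared]
  grind

lemma IsShared.exists_mem_ne {M : Set (Sym2 V)} {x : V} (hx : IsShared M x) (g : Sym2 V) :
    ∃ g' ∈ M, g' ≠ g ∧ x ∈ g' := by
  obtain ⟨g₁, hg₁, g₂, hg₂, hne, hx₁, hx₂⟩ := hx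
  by_cases h : g₁ = g
  · exact ⟨g₂, hg₂, h ▸ hne.symm, hx₂⟩
  · exact ⟨g₁, hg₁, h, hx₁⟩

lemma eq_of_not_isShared {M : Set (Sym2 V)} {x : V} (hx : ¬ IsShared M x) {g g' : Sym2 V}
    (hg : g ∈ M) (hg' : g' ∈ M) (hxg : x ∈ g) (hxg' : x ∈ g') : g = g' := by
  by_contra hne
  exact hx ⟨g, hg, g', hg', hne, hxg, hxg'⟩

def IsPrivate (G : SimpleGraph V) (M : Set (Sym2 V)) (g : Sym2 V) (q : V) : Prop :=
  EvDom G g q ∧ ∀ g' ∈ M, g' ≠ g → ¬ EvDom G g' q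

section Private

variable {G : SimpleGraph V} {M : Set (Sym2 V)} {g g' : Sym2 V} {a b q x : V}

lemma IsMinEvDomSet.exists_isPrivate [Finite V] (hM : IsMinEvDomSet G M) (hg : g ∈ M) :
    ∃ q, IsPrivate G M g q := by
  by_contra! hpriv
  have hsmaller : IsEvDomSet G (M \ {g}) := by
    refine ⟨Set.sdiff_subset.trans hM.1.1, fun v => ?_⟩
    obtain ⟨g'', hg'', hv⟩ := hM.1.2 v
    by_cases hgg : g'' = g
    · subst hgg
      obtain ⟨g', hg', hne, hv'⟩ : ∃ g' ∈ M, g' ≠ g'' ∧ EvDom G g' v := by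
        by_contra! h
        exact hpriv v ⟨hv, h⟩
      exact ⟨g', ⟨hg', hne⟩, hv'⟩
    · exact ⟨g'', ⟨hg'', hgg⟩, hv⟩
  have := hM.2 _ hsmaller
  have := Set.ncard_sdiff_singleton_lt_of_mem hg (Set.toFinite M)
  omega

lemma IsPrivate.eq_of_isPrivate (hq : IsPrivate G M g q) (hq' : IsPrivate G M g' q)
    (hg' : g' ∈ M) : g' = g := by
  by_contra hne
  exact hq.2 g' hg' hne hq'.1

lemma IsPrivate.ne_and_not_adj_of_isShared (hq : IsPrivate G M g q) (hx : IsShared M x) :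
    x ≠ q ∧ ¬ G.Adj x q := by
  obtain ⟨g', hg', hne, hxg'⟩ := hx.exists_mem_ne g
  have hdom := hq.2 g' hg' hne
  exact ⟨fun hxq => hdom (Or.inl (hxq ▸ hxg')), fun hxq => hdom (Or.inr ⟨x, hxg', hxq⟩)⟩

lemma IsPrivate.adj_of_isShared (hq : IsPrivate G M s(a, b) q) (hab : G.Adj a b)
    (ha : IsShared M a) : G.Adj b q := by
  obtain ⟨hne, hnadj⟩ := hq.ne_and_not_adj_of_isShared ha
  rcases hq.1 with hqab | ⟨u, hu, huq⟩
  · rcases Sym2.mem_iff.1 hqab with rfl | rfl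
    · exact absurd rfl hne
    · exact absurd hab hnadj
  · rcases Sym2.mem_iff.1 hu with rfl | rfl
    · exact absurd huq hnadj
    · exact huq

lemma IsPrivate.not_isShared_of_isShared (hq : IsPrivate G M s(a, b) q) (hab : G.Adj a b)
    (ha : IsShared M a) : ¬ IsShared M b := fun hb =>
  (hq.ne_and_not_adj_of_isShared hb).2 (hq.adj_of_isShared hab ha)

lemma IsPrivate.notMem_edgeVerts_of_isShared (hq : IsPrivate G M s(a, b) q) (hab : G.Adj a b)
    (ha : IsShared M a) : q ∉ edgeVerts M := by
  rintro ⟨g', hg', hqg'⟩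
  by_cases hg'ab : g' = s(a, b)
  · subst hg'ab
    rcases Sym2.mem_iff.1 hqg' with rfl | rfl
    · exact (hq.ne_and_not_adj_of_isShared ha).1 rfl
    · exact G.irrefl (hq.adj_of_isShared hab ha)
  · exact hq.2 g' hg' hg'ab (Or.inl hqg')

lemma IsPrivate.exists_eq_mk_of_isShared (hq : IsPrivate G M g q) (hg : g ∈ G.edgeSet) :
    ∃ w, ∀ x ∈ g, IsShared M x → g = s(x, w) := by
  induction g using Sym2.ind with | _ a b =>
  by_cases ha : IsShared M a
  · refine ⟨b, fun x hx hxs => ?_⟩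
    rcases Sym2.mem_iff.1 hx with rfl | rfl
    · rfl
    · exact absurd hxs (hq.not_isShared_of_isShared hg ha)
  · refine ⟨a, fun x hx hxs => ?_⟩
    rcases Sym2.mem_iff.1 hx with rfl | rfl
    · exact absurd hxs ha
    · exact Sym2.eq_swap

lemma IsPrivate.eq_of_isShared (hq : IsPrivate G M g q) (hg : g ∈ G.edgeSet) (hx : x ∈ g)
    (hxs : IsShared M x) {y : V} (hy : y ∈ g) (hys : IsShared M y) : y = x := by
  obtain ⟨w, hw⟩ := hq.exists_eq_mk_of_isShared hg
  exact (Sym2.congr_left.1 ((hw x hx hxs).symm.trans (hw y hy hys))).symm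

end Private

def IsMatchingCoverOf (G : SimpleGraph V) (M P : Set (Sym2 V)) : Prop :=
  P ⊆ G.edgeSet ∧ NoSharedVertex P ∧ edgeVerts M ⊆ edgeVerts P ∧ P.ncard ≤ M.ncard

lemma IsMinPairedDomSet.isMinPairedDomSet_edgeVerts [Finite V] {G : SimpleGraph V} {D : Set V}
    {M P : Set (Sym2 V)} (hD : IsMinPairedDomSet G D) (hM : IsMinEvDomSet G M)
    (hP : IsMatchingCoverOf G M P) : IsMinPairedDomSet G (edgeVerts P) := by
  obtain ⟨hPG, hPmatch, hMP, hcard⟩ := hP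
  refine ⟨⟨hM.1.isDomSet_edgeVerts.mono hMP, P, hPmatch.isPMOn_edgeVerts hPG⟩,
    fun D' hD' => ?_⟩
  calc (edgeVerts P).ncard ≤ 2 * P.ncard := ncard_edgeVerts_le (Set.toFinite P)
    _ ≤ 2 * M.ncard := Nat.mul_le_mul_left 2 hcard
    _ ≤ D.ncard := hD.1.two_mul_ncard_le hM
    _ ≤ D'.ncard := hD.2 D' hD'

structure ExchangeData (G : SimpleGraph V) (M : Set (Sym2 V)) where
  priv : Sym2 V → V
  other : Sym2 V → V
  subset_edgeSet : M ⊆ G.edgeSet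
  isPrivate : ∀ g ∈ M, IsPrivate G M g (priv g)
  eq_mk : ∀ g ∈ M, ∀ x ∈ g, IsShared M x → g = s(x, other g)

lemma IsMinEvDomSet.nonempty_exchangeData [Finite V] [Nonempty V] {G : SimpleGraph V}
    {M : Set (Sym2 V)} (hM : IsMinEvDomSet G M) : Nonempty (ExchangeData G M) := by
  choose! priv hpriv using fun g (hg : g ∈ M) => hM.exists_isPrivate hg
  choose! other hother using fun g (hg : g ∈ M) =>
    (hpriv g hg).exists_eq_mk_of_isShared (hM.1.1 hg)
  exact ⟨⟨priv, other, hM.1.1, hpriv, hother⟩⟩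

def droppedEdges (M : Set (Sym2 V)) (χ : V → Sym2 V) : Set (Sym2 V) :=
  {g ∈ M | ∃ x ∈ g, IsShared M x ∧ χ x ≠ g}

lemma exists_edge_selection {M : Set (Sym2 V)} {e : Sym2 V} {v : V} (he : e ∈ M) (hve : v ∈ e) :
    ∃ χ : V → Sym2 V, χ v = e ∧ ∀ x, IsShared M x → χ x ∈ M ∧ x ∈ χ x := by
  classical
  have : Nonempty (Sym2 V) := ⟨e⟩
  choose! χ hχ using fun x (hx : IsShared M x) => hx.exists_mem_ne e
  refine ⟨Function.update χ v e, Function.update_self .., fun x hx => ?_⟩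
  rcases eq_or_ne x v with rfl | hxv
  · simpa using ⟨he, hve⟩
  · simpa [Function.update_of_ne hxv] using ⟨(hχ x hx).1, (hχ x hx).2.2⟩

namespace ExchangeData

variable {G : SimpleGraph V} {M : Set (Sym2 V)} (X : ExchangeData G M) {χ : V → Sym2 V}
  {g : Sym2 V} {x : V}

def exchange (χ : V → Sym2 V) : Set (Sym2 V) :=
  (M \ droppedEdges M χ) ∪ (fun g => s(X.other g, X.priv g)) '' droppedEdges M χ

lemma other_spec (hg : g ∈ M) (hx : x ∈ g) (hxs : IsShared M x) :
    X.other g ∈ g ∧ ¬ IsShared M (X.other g) ∧ G.Adj (X.other g) (X.priv g) ∧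
      X.priv g ∉ edgeVerts M := by
  have hgx := X.eq_mk g hg x hx hxs
  generalize X.other g = w at hgx ⊢
  subst hgx
  have hq := X.isPrivate _ hg
  have hadj : G.Adj x w := X.subset_edgeSet hg
  exact ⟨Sym2.mem_mk_right _ _, hq.not_isShared_of_isShared hadj hxs, hq.adj_of_isShared hadj hxs,
    hq.notMem_edgeVerts_of_isShared hadj hxs⟩

lemma eq_other_of_not_isShared (hg : g ∈ M) (hx : x ∈ g) (hxs : IsShared M x) {y : V}
    (hy : y ∈ g) (hys : ¬ IsShared M y) : y = X.other g := by
  rw [X.eq_mk g hg x hx hxs, Sym2.mem_iff] at hy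
  exact hy.resolve_left fun h => hys (h ▸ hxs)

lemma other_spec_of_mem_droppedEdges (hg : g ∈ droppedEdges M χ) :
    X.other g ∈ g ∧ ¬ IsShared M (X.other g) ∧ G.Adj (X.other g) (X.priv g) ∧
      X.priv g ∉ edgeVerts M :=
  let ⟨hgM, _, hx, hxs, _⟩ := hg
  X.other_spec hgM hx hxs

lemma exchange_subset_edgeSet : X.exchange χ ⊆ G.edgeSet := by
  rintro h (⟨hh, -⟩ | ⟨g, hg, rfl⟩)
  · exact X.subset_edgeSet hh
  · exact (X.other_spec_of_mem_droppedEdges hg).2.2.1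

lemma edgeVerts_subset_edgeVerts_exchange
    (hχ : ∀ x, IsShared M x → χ x ∈ M ∧ x ∈ χ x) :
    edgeVerts M ⊆ edgeVerts (X.exchange χ) := by
  rintro x ⟨g, hg, hxg⟩
  by_cases hxs : IsShared M x
  · obtain ⟨hχM, hxχ⟩ := hχ x hxs
    refine ⟨χ x, Or.inl ⟨hχM, fun ⟨_, y, hy, hys, hne⟩ => hne ?_⟩, hxχ⟩
    rw [(X.isPrivate _ hχM).eq_of_isShared (X.subset_edgeSet hχM) hxχ hxs hy hys]
  · by_cases hgd : g ∈ droppedEdges M χ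
    · obtain ⟨-, y, hy, hys, -⟩ := id hgd
      refine ⟨_, Or.inr ⟨g, hgd, rfl⟩, ?_⟩
      rw [X.eq_other_of_not_isShared hg hy hys hxg hxs]
      exact Sym2.mem_mk_left _ _
    · exact ⟨g, Or.inl ⟨hg, hgd⟩, hxg⟩

lemma ncard_exchange_le [Finite V] : (X.exchange χ).ncard ≤ M.ncard :=
  calc (X.exchange χ).ncard
      ≤ (M \ droppedEdges M χ).ncard + (droppedEdges M χ).ncard :=
        (Set.ncard_union_le _ _).trans (Nat.add_le_add_left (Set.ncard_image_le (Set.toFinite _)) _)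
    _ = M.ncard := Set.ncard_sdiff_add_ncard_of_subset (fun _ hg => hg.1) (Set.toFinite M)

lemma notMem_replacement_of_mem_kept {h : Sym2 V} (hh : h ∈ M \ droppedEdges M χ)
    (hg : g ∈ droppedEdges M χ) (hx : x ∈ h) : x ∉ s(X.other g, X.priv g) := by
  obtain ⟨hother, hunshared, -, hpriv⟩ := X.other_spec_of_mem_droppedEdges hg
  intro hxg
  rcases Sym2.mem_iff.1 hxg with rfl | rfl
  · exact hh.2 (eq_of_not_isShared hunshared hh.1 hg.1 hx hother ▸ hg)
  · exact hpriv ⟨h, hh.1, hx⟩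

lemma eq_of_mem_exchange {h₁ h₂ : Sym2 V} (hh₁ : h₁ ∈ X.exchange χ)
    (hh₂ : h₂ ∈ X.exchange χ) (hx₁ : x ∈ h₁) (hx₂ : x ∈ h₂) : h₁ = h₂ := by
  rcases hh₁ with hk₁ | ⟨g₁, hg₁, rfl⟩ <;>
    rcases hh₂ with hk₂ | ⟨g₂, hg₂, rfl⟩
  · by_contra hne
    have hxs : IsShared M x := ⟨h₁, hk₁.1, h₂, hk₂.1, hne, hx₁, hx₂⟩
    have hχ₁ : χ x = h₁ := by_contra fun h => hk₁.2 ⟨hk₁.1, x, hx₁, hxs, h⟩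
    have hχ₂ : χ x = h₂ := by_contra fun h => hk₂.2 ⟨hk₂.1, x, hx₂, hxs, h⟩
    exact hne (hχ₁.symm.trans hχ₂)
  · exact absurd hx₂ (X.notMem_replacement_of_mem_kept hk₁ hg₂ hx₁)
  · exact absurd hx₁ (X.notMem_replacement_of_mem_kept hk₂ hg₁ hx₂)
  · obtain ⟨hother₁, hunshared₁, -, hpriv₁⟩ := X.other_spec_of_mem_droppedEdges hg₁
    obtain ⟨hother₂, -, -, hpriv₂⟩ := X.other_spec_of_mem_droppedEdges hg₂
    suffices g₁ = g₂ by rw [this]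
    rcases Sym2.mem_iff.1 hx₁ with rfl | rfl <;> rcases Sym2.mem_iff.1 hx₂ with h | h
    · exact eq_of_not_isShared hunshared₁ hg₁.1 hg₂.1 hother₁ (h ▸ hother₂)
    · exact absurd ⟨g₁, hg₁.1, h ▸ hother₁⟩ hpriv₂
    · exact absurd ⟨g₂, hg₂.1, h ▸ hother₂⟩ hpriv₁
    · exact (X.isPrivate g₂ hg₂.1).eq_of_isPrivate (h ▸ X.isPrivate g₁ hg₁.1) hg₁.1

lemma noSharedVertex_exchange : NoSharedVertex (X.exchange χ) :=
  fun _ hh₁ _ hh₂ hne _ hx₁ hx₂ => hne (X.eq_of_mem_exchange hh₁ hh₂ hx₁ hx₂)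

lemma isMatchingCoverOf_exchange [Finite V]
    (hχ : ∀ x, IsShared M x → χ x ∈ M ∧ x ∈ χ x) :
    IsMatchingCoverOf G M (X.exchange χ) :=
  ⟨X.exchange_subset_edgeSet, X.noSharedVertex_exchange,
    X.edgeVerts_subset_edgeVerts_exchange hχ, X.ncard_exchange_le⟩

lemma priv_mem_edgeVerts_exchange_iff (hg : g ∈ M) (hx : x ∈ g) (hxs : IsShared M x) :
    X.priv g ∈ edgeVerts (X.exchange χ) ↔ χ x ≠ g := by
  have hpriv := (X.other_spec hg hx hxs).2.2.2
  refine ⟨?_, fun hne =>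
    ⟨_, Or.inr ⟨g, ⟨hg, x, hx, hxs, hne⟩, rfl⟩, Sym2.mem_mk_right _ _⟩⟩
  rintro ⟨h, hk | ⟨g', hg', rfl⟩, hph⟩
  · exact absurd ⟨h, hk.1, hph⟩ hpriv
  · rcases Sym2.mem_iff.1 hph with h | h
    · exact absurd ⟨g', hg'.1, h ▸ (X.other_spec_of_mem_droppedEdges hg').1⟩ hpriv
    · obtain rfl := (X.isPrivate g hg).eq_of_isPrivate (h ▸ X.isPrivate g' hg'.1) hg'.1
      obtain ⟨-, y, hy, hys, hne⟩ := hg'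
      rwa [(X.isPrivate _ hg).eq_of_isShared (X.subset_edgeSet hg) hx hxs hy hys] at hne

end ExchangeData

lemma IsMinEvDomSet.exists_isMatchingCoverOf_ne [Finite V] {G : SimpleGraph V}
    {M : Set (Sym2 V)} {v : V} (hM : IsMinEvDomSet G M) (hv : IsShared M v) :
    ∃ P₁ P₂, IsMatchingCoverOf G M P₁ ∧ IsMatchingCoverOf G M P₂ ∧
      edgeVerts P₁ ≠ edgeVerts P₂ := by
  have : Nonempty V := ⟨v⟩
  obtain ⟨X⟩ := hM.nonempty_exchangeData
  obtain ⟨e, he, f, hf, hef, hve, hvf⟩ := id hv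
  obtain ⟨χ₁, hχ₁v, hχ₁⟩ := exists_edge_selection he hve
  obtain ⟨χ₂, hχ₂v, hχ₂⟩ := exists_edge_selection hf hvf
  refine ⟨X.exchange χ₁, X.exchange χ₂, X.isMatchingCoverOf_exchange hχ₁,
    X.isMatchingCoverOf_exchange hχ₂, fun h => ?_⟩
  have hpf := (X.priv_mem_edgeVerts_exchange_iff hf hvf hv).2 (hχ₁v ▸ hef)
  rw [h, X.priv_mem_edgeVerts_exchange_iff hf hvf hv] at hpf
  exact hpf hχ₂v

theorem stmt6_general [Fintype V] (G : SimpleGraph V)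
    (h : ∃! D : Set V, IsMinPairedDomSet G D) :
    ∀ M : Set (Sym2 V), IsMinEvDomSet G M → NoSharedVertex M := by
  obtain ⟨D, hD, hDuniq⟩ := h
  intro M hM
  refine noSharedVertex_iff.2 fun v hv => ?_
  obtain ⟨P₁, P₂, hP₁, hP₂, hne⟩ := hM.exists_isMatchingCoverOf_ne hv
  exact hne ((hDuniq _ (hD.isMinPairedDomSet_edgeVerts hM hP₁)).trans
    (hDuniq _ (hD.isMinPairedDomSet_edgeVerts hM hP₂)).symm)

theorem stmt6 [Fintype V] (G : SimpleGraph V) (hG : NoIsolated G)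
    (h : ∃! D : Set V, IsMinPairedDomSet G D) :
    ∀ M : Set (Sym2 V), IsMinEvDomSet G M → NoSharedVertex M :=
  stmt6_general G h
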